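/- Let ρ be a nonempty Cayley permutation and σ a ρ-minimal inversion sequence. Then |σ| - dist(σ) = |ρ| - dist(ρ) + mdd(ρ), where dist counts the number of distinct values and mdd(ρ) = max_i (ρ_i - i + 1). -/

import Mathlib

/-- `σ` is an inversion sequence: `σ_i ∈ {0,…,i-1}` (0-indexed: `σ[i] ≤ i`). -/
def IsInvSeq (σ : List ℕ) : Prop := ∀ i < σ.length, σ.getD i 0 ≤ i

/-- `σ` is a Cayley permutation: its value set is `{0,…,max σ}` (downward closed). -/
def IsCayley (σ : List ℕ) : Prop := ∀ v w : ℕ, w ∈ σ → v ≤ w → v ∈ σ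

/-- Maximum diagonal difference `max_i (σ_i - i + 1)` (0-indexed: `max_i (σ[i] - i)`). -/
def mdd (σ : List ℕ) : ℤ :=
  ((List.range σ.length).map (fun i => (σ.getD i 0 : ℤ) - i)).foldr max (-(σ.length : ℤ))

/-- `τ` and `σ` are order-isomorphic sequences of the same length. -/
def OrdIso (τ σ : List ℕ) : Prop :=
  τ.length = σ.length ∧ ∀ i j : ℕ, i < τ.length → j < τ.length →
    (τ.getD i 0 ≤ τ.getD j 0 ↔ σ.getD i 0 ≤ σ.getD j 0)

/-- `σ` contains the pattern `ρ` (i.e. `ρ ⪯ σ`): some subsequence of `σ` is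
order-isomorphic to `ρ`. -/
def ContainsPat (σ ρ : List ℕ) : Prop := ∃ τ : List ℕ, τ.Sublist σ ∧ OrdIso ρ τ

/-- The reduction of `σ`: the `j`-th smallest distinct value is replaced by `j-1`. -/
def red (σ : List ℕ) : List ℕ :=
  σ.map (fun v => (σ.toFinset.filter (fun w => w < v)).card)

/-- Number of distinct values of `σ`. -/
def distv (σ : List ℕ) : ℕ := σ.toFinset.card

/-- Positions (0-indexed) of saturated entries of `σ`. -/
def Sat (σ : List ℕ) : Set ℕ := {i | i < σ.length ∧ (σ.getD i 0 : ℤ) - i = mdd σ}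

/-- `σ` is a ρ-minimal inversion sequence: a minimal element, under pattern
containment, of the set of inversion sequences that are Cayley permutations and
contain `ρ`. -/
def IsMinimalFor (ρ σ : List ℕ) : Prop :=
  IsInvSeq σ ∧ IsCayley σ ∧ ContainsPat σ ρ ∧
  ∀ τ : List ℕ, IsInvSeq τ → IsCayley τ → ContainsPat τ ρ → ContainsPat σ τ → τ = σ

/-
Fix an occurrence `τ` of `ρ` in `σ`, at positions `f 0 < ⋯ < f (k-1)`, and let `s` be the last
position with `σ_s = s`. Deleting a position `q ≥ s` leaves an inversion sequence, whose
reduction is a Cayley inversion sequence contained in `σ` and shorter than `σ`; by minimality it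
cannot contain `ρ`, so `q` is used by the occurrence. Hence the positions `s, …, n-1` are exactly
`f i₀, …, f (k-1)` with `f i₀ = s`, and every value of `σ` missing from `τ` occurs only at
positions `< s`, so it is `< s`. Let `E` be the set of these missing values. As `σ` is Cayley,
`τ_j = ρ_j + #{e ∈ E | e < τ_j}`; and the positions `≥ τ_j` contain `f j, …, f (k-1)` together
with one position for each `e ∈ E` with `e ≥ τ_j` (because `σ_q ≤ q`). This gives
`ρ_j + |E| + (k - j) ≤ n` for all `j`, with equality at `j = i₀`, so
`mdd ρ = ρ_{i₀} - i₀ = n - k - |E|`, while `dist σ = dist ρ + |E|`.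
-/

open Finset

def valueRank (L : List ℕ) (v : ℕ) : ℕ := (L.toFinset.filter (· < v)).card

lemma red_eq_map (L : List ℕ) : red L = L.map (valueRank L) := rfl

lemma red_length (L : List ℕ) : (red L).length = L.length := List.length_map _

lemma valueRank_zero (L : List ℕ) : valueRank L 0 = 0 := by simp [valueRank]

lemma getD_red (L : List ℕ) (i : ℕ) : (red L).getD i 0 = valueRank L (L.getD i 0) := by
  rw [red_eq_map, ← valueRank_zero L, List.getD_map, valueRank_zero]

lemma valueRank_le (L : List ℕ) (v : ℕ) : valueRank L v ≤ v :=
  (card_le_card fun _ hw => mem_range.2 (mem_filter.1 hw).2).trans_eq (card_range v)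

lemma valueRank_mono (L : List ℕ) : Monotone (valueRank L) := fun _ _ h =>
  card_le_card (monotone_filter_right _ fun _ _ hw => lt_of_lt_of_le hw h)

lemma valueRank_lt_valueRank {L : List ℕ} {x y : ℕ} (hx : x ∈ L) (h : x < y) :
    valueRank L x < valueRank L y :=
  card_lt_card <| (ssubset_iff_of_subset (monotone_filter_right _ fun _ _ hw => hw.trans h)).2
    ⟨x, by simpa using ⟨hx, h⟩, by simp⟩

lemma le_iff_valueRank_le {L : List ℕ} {x y : ℕ} (hy : y ∈ L) :
    x ≤ y ↔ valueRank L x ≤ valueRank L y :=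
  ⟨fun h => valueRank_mono L h,
    fun h => not_lt.1 fun hyx => (valueRank_lt_valueRank hy hyx).not_ge h⟩

lemma valueRank_lt_distv {L : List ℕ} {u : ℕ} (hu : u ∈ L) : valueRank L u < distv L :=
  card_lt_card <| filter_ssubset.2 ⟨u, List.mem_toFinset.2 hu, lt_irrefl u⟩

lemma image_valueRank_toFinset (L : List ℕ) :
    L.toFinset.image (valueRank L) = range (distv L) := by
  refine eq_of_subset_of_card_le (image_subset_iff.2 fun u hu =>
    mem_range.2 (valueRank_lt_distv (List.mem_toFinset.1 hu))) ?_
  rw [card_range, card_image_of_injOn]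
  · rfl
  exact StrictMonoOn.injOn fun x hx _ _ h => valueRank_lt_valueRank (List.mem_toFinset.1 hx) h

lemma toFinset_red (L : List ℕ) : (red L).toFinset = range (distv L) := by
  rw [← image_valueRank_toFinset]
  ext
  simp [red_eq_map]

lemma distv_red (L : List ℕ) : distv (red L) = distv L := by
  rw [distv, toFinset_red, card_range]

lemma isCayley_red (L : List ℕ) : IsCayley (red L) := fun v w hw hvw => by
  rw [← List.mem_toFinset, toFinset_red, mem_range] at hw ⊢
  omega

lemma ordIso_red (L : List ℕ) : OrdIso (red L) L := by
  refine ⟨red_length L, fun i j _ hj => ?_⟩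
  rw [getD_red, getD_red]
  rw [red_length] at hj
  exact (le_iff_valueRank_le (List.getD_eq_getElem L 0 hj ▸ L.getElem_mem hj)).symm

lemma IsCayley.valueRank_eq {L : List ℕ} (hL : IsCayley L) {u : ℕ} (hu : u ∈ L) :
    valueRank L u = u := by
  have : L.toFinset.filter (· < u) = range u := by
    ext v
    simpa using fun hv => hL v u hu hv.le
  rw [valueRank, this, card_range]

lemma IsCayley.red_eq_self {L : List ℕ} (hL : IsCayley L) : red L = L := by
  conv_rhs => rw [← List.map_id L]
  exact List.map_congr_left fun _ hu => hL.valueRank_eq hu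

lemma IsCayley.add_card_filter_sdiff {σ τ : List ℕ} (hσ : IsCayley σ)
    (hτσ : τ.toFinset ⊆ σ.toFinset) {u : ℕ} (hu : u ∈ σ) :
    u + ((σ.toFinset \ τ.toFinset).filter (u ≤ ·)).card
      = valueRank τ u + (σ.toFinset \ τ.toFinset).card := by
  have hsplit :
      valueRank σ u = valueRank τ u + ((σ.toFinset \ τ.toFinset).filter (· < u)).card := by
    rw [valueRank, valueRank, ← union_sdiff_of_subset hτσ, filter_union,
      card_union_of_disjoint (disjoint_filter_filter disjoint_sdiff), union_sdiff_of_subset hτσ]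
  have hE := card_filter_add_card_filter_not (s := σ.toFinset \ τ.toFinset) (· < u)
  simp only [not_lt] at hE
  rw [hσ.valueRank_eq hu] at hsplit
  omega

lemma Finset.card_image_eq_card_image_of_eq_iff {ι α β : Type*} [DecidableEq α] [DecidableEq β]
    {s : Finset ι} {f : ι → α} {g : ι → β} (h : ∀ i ∈ s, ∀ j ∈ s, f i = f j ↔ g i = g j) :
    (s.image f).card = (s.image g).card := by
  let F : ι → α × β := fun i => (f i, g i)
  have hfst : (s.image F).image Prod.fst = s.image f := by rw [image_image]; rfl
  have hsnd : (s.image F).image Prod.snd = s.image g := by rw [image_image]; rfl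
  have hinj : ∀ x ∈ s.image F, ∀ y ∈ s.image F, x.1 = y.1 ↔ x.2 = y.2 := by
    simp only [mem_image]
    rintro _ ⟨i, hi, rfl⟩ _ ⟨j, hj, rfl⟩
    exact h i hi j hj
  calc (s.image f).card = ((s.image F).image Prod.fst).card := by rw [hfst]
    _ = ((s.image F).image Prod.snd).card := by
      rw [card_image_of_injOn fun x hx y hy hxy => Prod.ext hxy ((hinj x hx y hy).1 hxy),
        card_image_of_injOn fun x hx y hy hxy => Prod.ext ((hinj x hx y hy).2 hxy) hxy]
    _ = (s.image g).card := by rw [hsnd]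

lemma toFinset_eq_image_getD (L : List ℕ) :
    L.toFinset = (range L.length).image (L.getD · 0) := by
  ext v
  simp only [List.mem_toFinset, List.mem_iff_getElem, mem_image, mem_range]
  exact ⟨fun ⟨i, hi, h⟩ => ⟨i, hi, by rw [List.getD_eq_getElem _ _ hi, h]⟩,
    fun ⟨i, hi, h⟩ => ⟨i, hi, by rw [← List.getD_eq_getElem _ 0 hi, h]⟩⟩

lemma valueRank_eq_card_image (L : List ℕ) (v : ℕ) :
    valueRank L v = (((range L.length).filter (L.getD · 0 < v)).image (L.getD · 0)).card := by
  rw [valueRank, toFinset_eq_image_getD, filter_image]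

lemma OrdIso.getD_lt_iff {ρ τ : List ℕ} (h : OrdIso ρ τ) {i j : ℕ} (hi : i < ρ.length)
    (hj : j < ρ.length) : ρ.getD i 0 < ρ.getD j 0 ↔ τ.getD i 0 < τ.getD j 0 := by
  simpa only [not_le] using (h.2 j i hj hi).not

lemma OrdIso.getD_eq_iff {ρ τ : List ℕ} (h : OrdIso ρ τ) {i j : ℕ} (hi : i < ρ.length)
    (hj : j < ρ.length) : ρ.getD i 0 = ρ.getD j 0 ↔ τ.getD i 0 = τ.getD j 0 := by
  rw [le_antisymm_iff, le_antisymm_iff, h.2 i j hi hj, h.2 j i hj hi]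

lemma OrdIso.red_eq {ρ τ : List ℕ} (h : OrdIso ρ τ) : red ρ = red τ := by
  refine List.ext_getElem (by simp [red_length, h.1]) fun j hjρ hjτ => ?_
  rw [red_length] at hjρ hjτ
  rw [← List.getD_eq_getElem _ 0, ← List.getD_eq_getElem _ 0, getD_red, getD_red,
    valueRank_eq_card_image, valueRank_eq_card_image, ← h.1]
  rw [filter_congr fun i hi => h.getD_lt_iff (mem_range.1 hi) hjρ]
  exact card_image_eq_card_image_of_eq_iff fun i hi k hk =>
    h.getD_eq_iff (mem_range.1 (mem_filter.1 hi).1) (mem_range.1 (mem_filter.1 hk).1)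

lemma ContainsPat.red {σ ρ : List ℕ} (h : ContainsPat σ ρ) : ContainsPat (red σ) ρ := by
  obtain ⟨τ, hτσ, hlen, hρτ⟩ := h
  refine ⟨τ.map (valueRank σ), red_eq_map σ ▸ hτσ.map _, by simp [hlen], fun i j hi hj => ?_⟩
  have hj' : j < τ.length := hlen ▸ hj
  have hmap : ∀ k, (τ.map (valueRank σ)).getD k 0 = valueRank σ (τ.getD k 0) := fun k => by
    rw [← valueRank_zero σ, List.getD_map, valueRank_zero]
  rw [hmap, hmap, hρτ i j hi hj]
  exact le_iff_valueRank_le (hτσ.subset (List.getD_eq_getElem τ 0 hj' ▸ τ.getElem_mem hj'))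

lemma IsInvSeq.getD_le {σ : List ℕ} (hσ : IsInvSeq σ) (i : ℕ) : σ.getD i 0 ≤ i := by
  by_cases hi : i < σ.length
  · exact hσ i hi
  · rw [List.getD_eq_default _ _ (by omega)]
    exact Nat.zero_le i

lemma IsInvSeq.red {σ : List ℕ} (hσ : IsInvSeq σ) : IsInvSeq (red σ) := fun i _ => by
  rw [getD_red]
  exact (valueRank_le σ _).trans (hσ.getD_le i)

lemma getD_eraseIdx (σ : List ℕ) (t i : ℕ) :
    (σ.eraseIdx t).getD i 0 = if i < t then σ.getD i 0 else σ.getD (i + 1) 0 := by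
  simp only [List.getD_eq_getElem?_getD, List.getElem?_eraseIdx]
  split_ifs <;> rfl

lemma IsInvSeq.eraseIdx {σ : List ℕ} (hσ : IsInvSeq σ) {t : ℕ}
    (hsat : ∀ j, t < j → j < σ.length → σ.getD j 0 ≠ j) : IsInvSeq (σ.eraseIdx t) := by
  intro i _
  rw [getD_eraseIdx]
  split_ifs with hit
  · exact hσ.getD_le i
  · have := hσ.getD_le (i + 1)
    by_cases hi : i + 1 < σ.length
    · have := hsat (i + 1) (by omega) hi
      omega
    · rw [List.getD_eq_default _ _ (by omega)]
      exact Nat.zero_le i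

lemma IsInvSeq.exists_last_saturated {σ : List ℕ} (hσ : IsInvSeq σ) (hn : 0 < σ.length) :
    ∃ s < σ.length, σ.getD s 0 = s ∧ ∀ j, s < j → j < σ.length → σ.getD j 0 ≠ j := by
  let P := fun j => σ.getD j 0 = j
  refine ⟨Nat.findGreatest P (σ.length - 1), ?_, ?_, fun j hj hjn =>
    Nat.findGreatest_is_greatest (P := P) hj (by omega)⟩
  · have := Nat.findGreatest_le (P := P) (σ.length - 1)
    omega
  · exact Nat.findGreatest_spec (P := P) (Nat.zero_le _) (Nat.le_zero.1 (hσ 0 hn))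

lemma IsMinimalFor.not_isInvSeq_eraseIdx {ρ σ : List ℕ} (hmin : IsMinimalFor ρ σ) {q : ℕ}
    (hq : q < σ.length) (hρ : ContainsPat (σ.eraseIdx q) ρ) : ¬ IsInvSeq (σ.eraseIdx q) := by
  intro hinv
  have := hmin.2.2.2 _ hinv.red (isCayley_red _) hρ.red
    ⟨_, List.eraseIdx_sublist σ q, ordIso_red _⟩
  have hlen := congrArg List.length this
  rw [red_length, List.length_eraseIdx_of_lt hq] at hlen
  omega

def IsOccurrence {α : Type*} (f : ℕ ↪o ℕ) (τ σ : List α) : Prop := ∀ i, τ[i]? = σ[f i]?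

section Occurrence

variable {α : Type*} {f : ℕ ↪o ℕ} {τ σ : List α}

lemma isOccurrence_of_sublist (h : τ.Sublist σ) : ∃ f : ℕ ↪o ℕ, IsOccurrence f τ σ :=
  List.sublist_iff_exists_orderEmbedding_getElem?_eq.1 h

lemma IsOccurrence.getD_apply (hf : IsOccurrence f τ σ) (i : ℕ) (d : α) :
    σ.getD (f i) d = τ.getD i d := by
  simp only [List.getD_eq_getElem?_getD, hf i]

lemma IsOccurrence.apply_lt_length_iff (hf : IsOccurrence f τ σ) {i : ℕ} :
    f i < σ.length ↔ i < τ.length := by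
  rw [← not_iff_not, not_lt, not_lt, ← List.getElem?_eq_none_iff, ← List.getElem?_eq_none_iff,
    hf i]

lemma IsOccurrence.sublist_eraseIdx (hf : IsOccurrence f τ σ) {q : ℕ} (hq : ∀ i, f i ≠ q) :
    τ.Sublist (σ.eraseIdx q) := by
  refine List.sublist_iff_exists_orderEmbedding_getElem?_eq.2
    ⟨OrderEmbedding.ofStrictMono (fun i => if f i < q then f i else f i - 1) fun a b hab => ?_,
      fun i => ?_⟩
  · have := f.strictMono hab
    have := hq a
    have := hq b
    dsimp only
    split_ifs <;> omega
  · have := hq i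
    change τ[i]? = (σ.eraseIdx q)[if f i < q then f i else f i - 1]?
    rw [List.getElem?_eraseIdx, hf]
    split_ifs <;> first | rfl | omega | (congr 1; omega)

end Occurrence

lemma IsMinimalFor.mem_range_of_forall_getD_ne {ρ σ τ : List ℕ} {f : ℕ ↪o ℕ}
    (hmin : IsMinimalFor ρ σ) (hρτ : OrdIso ρ τ) (hf : IsOccurrence f τ σ) {q : ℕ}
    (hq : q < σ.length) (hsat : ∀ j, q < j → j < σ.length → σ.getD j 0 ≠ j) :
    q ∈ Set.range f := by
  by_contra h
  exact hmin.not_isInvSeq_eraseIdx hq ⟨τ, hf.sublist_eraseIdx fun i hi => h ⟨i, hi⟩, hρτ⟩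
    (hmin.1.eraseIdx hsat)

section Counting

variable {f : ℕ ↪o ℕ} {τ σ : List ℕ}

lemma IsOccurrence.toFinset_subset (hf : IsOccurrence f τ σ) : τ.toFinset ⊆ σ.toFinset :=
  Multiset.toFinset_subset.2 (Multiset.coe_subset.2
    (List.sublist_of_orderEmbedding_getElem?_eq f hf).subset)

lemma IsOccurrence.getD_mem (hf : IsOccurrence f τ σ) {j : ℕ} (hj : j < τ.length) :
    τ.getD j 0 ∈ σ := by
  have hfj := hf.apply_lt_length_iff.2 hj
  rw [← hf.getD_apply, List.getD_eq_getElem _ _ hfj]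
  exact σ.getElem_mem hfj

lemma IsOccurrence.length_sub_apply (hf : IsOccurrence f τ σ) {i₀ : ℕ}
    (hcov : ∀ q, f i₀ ≤ q → q < σ.length → q ∈ Set.range f) :
    σ.length - f i₀ = τ.length - i₀ := by
  have : (Ico i₀ τ.length).map f.toEmbedding = Ico (f i₀) σ.length := by
    ext q
    simp only [mem_map, mem_Ico, RelEmbedding.coe_toEmbedding]
    constructor
    · rintro ⟨i, ⟨h₁, h₂⟩, rfl⟩
      exact ⟨f.monotone h₁, hf.apply_lt_length_iff.2 h₂⟩
    · rintro ⟨h₁, h₂⟩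
      obtain ⟨i, rfl⟩ := hcov q h₁ h₂
      exact ⟨i, ⟨f.le_iff_le.1 h₁, hf.apply_lt_length_iff.1 h₂⟩, rfl⟩
  simpa using (congrArg card this).symm

lemma IsOccurrence.lt_apply_of_mem_sdiff (hf : IsOccurrence f τ σ) (hσ : IsInvSeq σ) {i₀ : ℕ}
    (hcov : ∀ q, f i₀ ≤ q → q < σ.length → q ∈ Set.range f) {w : ℕ}
    (hw : w ∈ σ.toFinset \ τ.toFinset) : w < f i₀ := by
  simp only [mem_sdiff, List.mem_toFinset, List.mem_iff_getElem] at hw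
  obtain ⟨⟨q, hq, rfl⟩, hwτ⟩ := hw
  have hqi₀ : q < f i₀ := by
    by_contra! hle
    obtain ⟨i, rfl⟩ := hcov q hle hq
    have hi := hf.apply_lt_length_iff.1 hq
    exact hwτ ⟨i, hi, by rw [← List.getD_eq_getElem _ 0, ← List.getD_eq_getElem _ 0,
      hf.getD_apply]⟩
  have := hσ.getD_le q
  rw [List.getD_eq_getElem _ _ hq] at this
  omega

lemma IsOccurrence.getD_add_card_filter_add_le (hf : IsOccurrence f τ σ) (hσ : IsInvSeq σ)
    {j : ℕ} (hj : j < τ.length) :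
    τ.getD j 0 + ((σ.toFinset \ τ.toFinset).filter (τ.getD j 0 ≤ ·)).card + (τ.length - j)
      ≤ σ.length := by
  set u := τ.getD j 0
  set H := (σ.toFinset \ τ.toFinset).filter (u ≤ ·)
  have hu : u ≤ f j := by simpa only [hf.getD_apply] using hσ.getD_le (f j)
  have hocc : (Ico j τ.length).map f.toEmbedding ⊆ Ico u σ.length := by
    intro q hq
    simp only [mem_map, mem_Ico, RelEmbedding.coe_toEmbedding] at hq ⊢
    obtain ⟨i, ⟨h₁, h₂⟩, rfl⟩ := hq
    exact ⟨hu.trans (f.monotone h₁), hf.apply_lt_length_iff.2 h₂⟩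
  have hext : H.image σ.idxOf ⊆ Ico u σ.length := by
    intro q hq
    simp only [H, mem_image, mem_filter, mem_sdiff, List.mem_toFinset] at hq
    obtain ⟨w, ⟨⟨hwσ, -⟩, huw⟩, rfl⟩ := hq
    have hlt := List.idxOf_lt_length_iff.2 hwσ
    have := hσ.getD_le (σ.idxOf w)
    rw [List.getD_eq_getElem _ _ hlt, List.getElem_idxOf] at this
    exact mem_Ico.2 ⟨huw.trans this, hlt⟩
  have hdisj : Disjoint ((Ico j τ.length).map f.toEmbedding) (H.image σ.idxOf) := by
    simp only [disjoint_left, mem_map, mem_Ico, RelEmbedding.coe_toEmbedding, mem_image, H,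
      mem_filter, mem_sdiff, List.mem_toFinset, not_exists, not_and]
    rintro _ ⟨i, ⟨-, hi⟩, rfl⟩ w ⟨⟨hwσ, hwτ⟩, -⟩ hiw
    have := hf.getD_apply i 0
    rw [← hiw, List.getD_eq_getElem _ _ (List.idxOf_lt_length_iff.2 hwσ),
      List.getElem_idxOf] at this
    exact hwτ (this ▸ List.getD_eq_getElem τ 0 hi ▸ τ.getElem_mem hi)
  have hcard := card_le_card (union_subset hocc hext)
  rw [card_union_of_disjoint hdisj, card_map, card_image_of_injOn, Nat.card_Ico,
    Nat.card_Ico] at hcard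
  · have : u < σ.length := hu.trans_lt (hf.apply_lt_length_iff.2 hj)
    omega
  · intro w hw w' _ h
    simp only [H, coe_filter, mem_sdiff, List.mem_toFinset, Set.mem_ofPred_eq] at hw
    exact (List.idxOf_inj hw.1.1).1 h

lemma IsOccurrence.valueRank_add_card_sdiff_add_le (hf : IsOccurrence f τ σ) (hσ : IsInvSeq σ)
    (hσC : IsCayley σ) {j : ℕ} (hj : j < τ.length) :
    valueRank τ (τ.getD j 0) + (σ.toFinset \ τ.toFinset).card + (τ.length - j) ≤ σ.length := by
  have := hσC.add_card_filter_sdiff hf.toFinset_subset (hf.getD_mem hj)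
  have := hf.getD_add_card_filter_add_le hσ hj
  omega

lemma IsOccurrence.valueRank_add_card_sdiff_add_eq (hf : IsOccurrence f τ σ) (hσ : IsInvSeq σ)
    (hσC : IsCayley σ) {i₀ : ℕ} (hi₀ : i₀ < τ.length) (hsat : σ.getD (f i₀) 0 = f i₀)
    (hcov : ∀ q, f i₀ ≤ q → q < σ.length → q ∈ Set.range f) :
    valueRank τ (τ.getD i₀ 0) + (σ.toFinset \ τ.toFinset).card + (τ.length - i₀)
      = σ.length := by
  have hu : τ.getD i₀ 0 = f i₀ := (hf.getD_apply i₀ 0).symm.trans hsat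
  have hrank := hσC.add_card_filter_sdiff hf.toFinset_subset (hf.getD_mem hi₀)
  rw [filter_false_of_mem fun w hw => not_le.2 (hu ▸ hf.lt_apply_of_mem_sdiff hσ hcov hw),
    card_empty] at hrank
  have := hf.length_sub_apply hcov
  have := hf.apply_lt_length_iff.2 hi₀
  omega

end Counting

lemma List.foldr_max_le {α : Type*} [LinearOrder α] {l : List α} {b c : α} (hb : b ≤ c)
    (h : ∀ x ∈ l, x ≤ c) : l.foldr max b ≤ c := by
  induction l with
  | nil => exact hb
  | cons a l ih => simp_all

lemma mdd_eq {L : List ℕ} {j₀ : ℕ} (hj₀ : j₀ < L.length)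
    (h : ∀ j < L.length, (L.getD j 0 : ℤ) - j ≤ L.getD j₀ 0 - j₀) :
    mdd L = L.getD j₀ 0 - j₀ := by
  refine le_antisymm (List.foldr_max_le (by omega) ?_)
    (List.le_max_of_le' _ (List.mem_map.2 ⟨j₀, List.mem_range.2 hj₀, rfl⟩) le_rfl)
  simp only [List.mem_map, List.mem_range]
  rintro _ ⟨j, hj, rfl⟩
  exact h j hj

theorem stmt12 (ρ σ : List ℕ) (hρ : ρ ≠ []) (hC : IsCayley ρ)
    (hmin : IsMinimalFor ρ σ) :
    (σ.length : ℤ) - distv σ = (ρ.length : ℤ) - distv ρ + mdd ρ := by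
  obtain ⟨hσ, hσC, ⟨τ, hτσ, hρτ⟩, -⟩ := id hmin
  obtain ⟨f, hf⟩ := isOccurrence_of_sublist hτσ
  have hred : red τ = ρ := hρτ.red_eq.symm.trans hC.red_eq_self
  have hrank : ∀ j, valueRank τ (τ.getD j 0) = ρ.getD j 0 := fun j => by rw [← getD_red, hred]
  have hk : τ.length = ρ.length := hρτ.1.symm
  obtain ⟨s, hs, hsat, hlast⟩ := hσ.exists_last_saturated
    ((List.length_pos_iff.2 hρ).trans_le (hk ▸ hτσ.length_le))
  have hcov : ∀ q, s ≤ q → q < σ.length → q ∈ Set.range f := fun q hsq hq =>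
    hmin.mem_range_of_forall_getD_ne hρτ hf hq fun j hqj => hlast j (by omega)
  obtain ⟨i₀, rfl⟩ := hcov s le_rfl hs
  have hi₀ : i₀ < τ.length := hf.apply_lt_length_iff.1 hs
  have heq := hf.valueRank_add_card_sdiff_add_eq hσ hσC hi₀ hsat hcov
  have hle := fun j (hj : j < ρ.length) => hf.valueRank_add_card_sdiff_add_le hσ hσC (hk ▸ hj)
  have hdist : distv σ = distv ρ + (σ.toFinset \ τ.toFinset).card := by
    rw [← hred, distv_red, distv, distv, card_sdiff_of_subset hf.toFinset_subset,
      Nat.add_sub_cancel' (card_le_card hf.toFinset_subset)]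
  simp only [hrank, hk] at heq hle
  rw [mdd_eq (hk ▸ hi₀) fun j hj => by have := hle j hj; omega, hdist]
  push_cast
  omega
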